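/- arXiv:2108.11998 — 3 statements merged into one kernel-verified Lean document; each statement's English description precedes it below -/
import Mathlib

section
/- Let X be a random vector taking values in the standard N-simplex Δ_N (so X_n ≥ 0 and Σ_n X_n = 1 a.s.), with μ_n = E[X_n] > 0 for all n, and covariance matrix σ_{nl} = Cov(X_n, X_l). Define the diagonal matrix M = diag(1/μ_1, ..., 1/μ_N) and the matrix S with entries S_{nl} = σ_{nl}/(μ_n μ_l). Then for every vector c ∈ ℝ^N with Σ_n c_n = 0, one has cᵀ(M − S)c ≥ 0. -/
open MeasureTheory Finset ProbabilityTheory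

/-!
With `b = M c`, i.e. `b n = c n / μ n`, the two halves of the quadratic form are
`cᵀ M c = ∑ b n ^ 2 μ n = E[∑ b n ^ 2 X n]` and `cᵀ S c = Var[∑ b n X n] ≤ E[(∑ b n X n) ^ 2]`.
Since `X` lies in the simplex, its coordinates are probability weights, so Jensen's inequality
for the square gives `(∑ b n X n) ^ 2 ≤ ∑ b n ^ 2 X n` pointwise.
-/

theorem sq_sum_mul_le_sum_sq_mul {ι : Type*} (s : Finset ι) {w : ι → ℝ}
    (hw₀ : ∀ i ∈ s, 0 ≤ w i) (hw₁ : ∑ i ∈ s, w i = 1) (b : ι → ℝ) :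
    (∑ i ∈ s, b i * w i) ^ 2 ≤ ∑ i ∈ s, b i ^ 2 * w i := by
  simpa [smul_eq_mul, mul_comm] using
    (Even.convexOn_pow even_two).map_sum_le hw₀ hw₁ (p := b) fun i _ => Set.mem_univ _

theorem quadratic_form_diag_inv_sub {ι : Type*} [Fintype ι] [DecidableEq ι] {μ : ι → ℝ}
    (hμ : ∀ n, μ n ≠ 0) (σ : ι → ι → ℝ) (c : ι → ℝ) :
    ∑ n, ∑ l, c n * c l * ((if n = l then 1 / μ n else 0) - σ n l / (μ n * μ l))
      = ∑ n, (c n / μ n) ^ 2 * μ n - ∑ n, ∑ l, c n / μ n * (c l / μ l) * σ n l := by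
  simp only [mul_sub, sum_sub_distrib, mul_ite, mul_zero, sum_ite_eq, mem_univ, if_true]
  congr 1
  · refine sum_congr rfl fun n _ => ?_
    field_simp [hμ n]
  · refine sum_congr rfl fun n _ => sum_congr rfl fun l _ => ?_
    field_simp [hμ n, hμ l]

section RandomVector

variable {Ω ι : Type*} [MeasurableSpace Ω] {P : Measure Ω} [IsProbabilityMeasure P] [Fintype ι]
  {X : Ω → ι → ℝ}

theorem sum_mul_covariance_le_integral_sq (hX : ∀ i, MemLp (fun ω => X ω i) 2 P) (b : ι → ℝ) :
    ∑ i, ∑ j, b i * b j * cov[fun ω => X ω i, fun ω => X ω j; P]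
      ≤ ∫ ω, (∑ i, b i * X ω i) ^ 2 ∂P := by
  have hbX : ∀ i, MemLp (fun ω => b i * X ω i) 2 P := fun i => (hX i).const_mul (b i)
  calc ∑ i, ∑ j, b i * b j * cov[fun ω => X ω i, fun ω => X ω j; P]
      = Var[fun ω => ∑ i, b i * X ω i; P] := by
        rw [variance_fun_sum hbX]
        refine sum_congr rfl fun i _ => sum_congr rfl fun j _ => ?_
        rw [covariance_const_mul_left, covariance_const_mul_right, mul_assoc]
    _ ≤ ∫ ω, (∑ i, b i * X ω i) ^ 2 ∂P :=
        variance_le_expectation_sq (memLp_finsetSum univ fun i _ => hbX i).aestronglyMeasurable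

theorem memLp_of_ae_mem_simplex (hsimplex : ∀ᵐ ω ∂P, (∀ i, 0 ≤ X ω i) ∧ ∑ i, X ω i = 1)
    (hX : ∀ i, AEStronglyMeasurable (fun ω => X ω i) P)
    (p : ENNReal) (i : ι) : MemLp (fun ω => X ω i) p P := by
  refine MemLp.of_bound (hX i) 1 ?_
  filter_upwards [hsimplex] with ω ⟨hnonneg, hsum⟩
  rw [Real.norm_eq_abs, abs_of_nonneg (hnonneg i), ← hsum]
  exact single_le_sum (fun j _ => hnonneg j) (mem_univ i)

theorem integral_sq_sum_mul_le_of_ae_mem_simplex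
    (hsimplex : ∀ᵐ ω ∂P, (∀ i, 0 ≤ X ω i) ∧ ∑ i, X ω i = 1)
    (hX : ∀ i, Integrable (fun ω => X ω i) P) (b : ι → ℝ) :
    ∫ ω, (∑ i, b i * X ω i) ^ 2 ∂P ≤ ∑ i, b i ^ 2 * ∫ ω, X ω i ∂P := by
  have hL2 := memLp_of_ae_mem_simplex hsimplex (fun i => (hX i).aestronglyMeasurable) 2
  have hsq : Integrable (fun ω => (∑ i, b i * X ω i) ^ 2) P :=
    (memLp_finsetSum univ fun i _ => (hL2 i).const_mul (b i)).integrable_sq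
  simp_rw [← integral_const_mul]
  rw [← integral_finsetSum _ fun i _ => (hX i).const_mul _]
  refine integral_mono_ae hsq (integrable_finsetSum _ fun i _ => (hX i).const_mul _) ?_
  filter_upwards [hsimplex] with ω ⟨hnonneg, hsum⟩
  exact sq_sum_mul_le_sum_sq_mul univ (fun i _ => hnonneg i) hsum b

end RandomVector

theorem stmt0_general {Ω : Type*} [MeasureSpace Ω] [IsProbabilityMeasure (volume : Measure Ω)]
    {N : ℕ} (X : Ω → Fin N → ℝ)
    (hsimplex : ∀ᵐ ω ∂(volume : Measure Ω), (∀ n, 0 ≤ X ω n) ∧ ∑ n, X ω n = 1)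
    (μ : Fin N → ℝ) (hμ : ∀ n, μ n = ∫ ω, X ω n ∂(volume : Measure Ω)) (hμpos : ∀ n, 0 < μ n)
    (σ : Fin N → Fin N → ℝ)
    (hσ : ∀ n l, σ n l = ∫ ω, (X ω n - μ n) * (X ω l - μ l) ∂(volume : Measure Ω))
    (c : Fin N → ℝ) :
    0 ≤ ∑ n, ∑ l, c n * c l * ((if n = l then 1 / μ n else 0) - σ n l / (μ n * μ l)) := by
  -- non-integrable functions have integral `0`, so a positive mean forces integrability
  have hX : ∀ n, Integrable (fun ω => X ω n) :=
    fun n => Integrable.of_integral_ne_zero (hμ n ▸ (hμpos n).ne')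
  have hcov : ∀ n l, σ n l = cov[fun ω => X ω n, fun ω => X ω l] := by
    intro n l
    rw [hσ, hμ n, hμ l]
    rfl
  set b : Fin N → ℝ := fun n => c n / μ n
  rw [quadratic_form_diag_inv_sub (fun n => (hμpos n).ne'), sub_nonneg]
  calc ∑ n, ∑ l, b n * b l * σ n l
      = ∑ n, ∑ l, b n * b l * cov[fun ω => X ω n, fun ω => X ω l] := by simp_rw [hcov]
    _ ≤ ∫ ω, (∑ n, b n * X ω n) ^ 2 :=
        sum_mul_covariance_le_integral_sq
          (memLp_of_ae_mem_simplex hsimplex (fun n => (hX n).aestronglyMeasurable) 2) b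
    _ ≤ ∑ n, b n ^ 2 * μ n := by
        simpa only [hμ] using integral_sq_sum_mul_le_of_ae_mem_simplex hsimplex hX b

/-- Lemma 1 of the paper: for a simplex-valued random vector `X` with positive
component means `μ` and covariance matrix `σ`, the quadratic form of `M - S`
(with `M = diag(1/μ)` and `S n l = σ n l / (μ n μ l)`) is nonnegative on
sum-zero vectors. -/
theorem stmt0 {Ω : Type*} [MeasureSpace Ω] [IsProbabilityMeasure (volume : Measure Ω)]
    {N : ℕ} (X : Ω → Fin N → ℝ)
    (hmeas : ∀ n, Measurable fun ω => X ω n)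
    (hsimplex : ∀ᵐ ω ∂(volume : Measure Ω), (∀ n, 0 ≤ X ω n) ∧ ∑ n, X ω n = 1)
    (μ : Fin N → ℝ) (hμ : ∀ n, μ n = ∫ ω, X ω n ∂(volume : Measure Ω)) (hμpos : ∀ n, 0 < μ n)
    (σ : Fin N → Fin N → ℝ)
    (hσ : ∀ n l, σ n l = ∫ ω, (X ω n - μ n) * (X ω l - μ l) ∂(volume : Measure Ω))
    (c : Fin N → ℝ) (hc : ∑ n, c n = 0) :
    0 ≤ ∑ n, ∑ l, c n * c l * ((if n = l then 1 / μ n else 0) - σ n l / (μ n * μ l)) :=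
  stmt0_general X hsimplex μ hμ hμpos σ hσ c
end

section
/- Let θ_0 ≥ 0, θ_1 ≤ 0, v > 0, and define f(z) = θ_0 + (θ_1 − θ_0)/(1 + e^{−z}) for z ∈ ℝ. Then the scale function s(z) = ∫_0^z exp(−∫_0^y 2f(u)/v² du) dy satisfies s(z) = C ∫_1^{e^z} (1+u)^{2(θ_0−θ_1)/v²} u^{−1−2θ_0/v²} du with C = 4^{(θ_1−θ_0)/v²}; in particular s(z) → +∞ as z → +∞ and s(z) → −∞ as z → −∞. -/
/-!
With `a = 2(θ₀ - θ₁)/v²` and `b = 2θ₀/v²`, the drift `2f/v²` has the explicit antiderivative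
`b y - a log (1 + eʸ)`, so the integrand of `s` is `2⁻ᵃ eʸ (1 + eʸ)ᵃ (eʸ)^(-1-b)` and the
substitution `u = eʸ` gives the formula. Since `0 ≤ b ≤ a`, we have `b y ≤ a log (1 + eʸ)` for
every `y`, so the integrand is at least `2⁻ᵃ > 0` and `s` grows at least linearly in both
directions.
-/

open Real Filter

open Set intervalIntegral
open MeasureTheory (volume)

section LowerBound

variable {φ : ℝ → ℝ} {c : ℝ}

lemma mul_le_integral_of_const_le (hφ : Continuous φ) (hle : ∀ y, c ≤ φ y) {z : ℝ}
    (hz : 0 ≤ z) : c * z ≤ ∫ y in 0..z, φ y := by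
  have := integral_mono_on hz (intervalIntegrable_const (μ := volume)) (hφ.intervalIntegrable 0 z)
    fun y _ => hle y
  simpa [mul_comm] using this

lemma integral_le_mul_of_const_le (hφ : Continuous φ) (hle : ∀ y, c ≤ φ y) {z : ℝ}
    (hz : z ≤ 0) : ∫ y in 0..z, φ y ≤ c * z := by
  have := integral_mono_on hz (intervalIntegrable_const (μ := volume)) (hφ.intervalIntegrable z 0)
    fun y _ => hle y
  rw [integral_const, smul_eq_mul] at this
  rw [integral_symm]
  linarith

lemma tendsto_integral_atTop_of_const_le (hc : 0 < c) (hφ : Continuous φ)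
    (hle : ∀ y, c ≤ φ y) : Tendsto (fun z => ∫ y in 0..z, φ y) atTop atTop :=
  tendsto_atTop_mono' atTop
    (eventually_ge_atTop 0 |>.mono fun _ hz => mul_le_integral_of_const_le hφ hle hz)
    (tendsto_id.const_mul_atTop hc)

lemma tendsto_integral_atBot_of_const_le (hc : 0 < c) (hφ : Continuous φ)
    (hle : ∀ y, c ≤ φ y) : Tendsto (fun z => ∫ y in 0..z, φ y) atBot atBot :=
  tendsto_atBot_mono' atBot
    (eventually_le_atBot 0 |>.mono fun _ hz => integral_le_mul_of_const_le hφ hle hz)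
    (tendsto_id.const_mul_atBot hc)

end LowerBound

lemma integral_exp_mul_comp_exp {g : ℝ → ℝ} (hg : ContinuousOn g (Ioi 0)) (z₀ z : ℝ) :
    ∫ y in z₀..z, exp y * g (exp y) = ∫ u in exp z₀..exp z, g u := by
  simpa only [Function.comp, mul_comm] using integral_comp_mul_deriv'
    (fun y _ => hasDerivAt_exp y) continuousOn_exp
    (hg.mono (image_subset_iff.2 fun y _ => exp_pos y))

noncomputable def scalePotential (a b y : ℝ) : ℝ := b * y - a * log (1 + exp y)

lemma hasDerivAt_scalePotential (a b y : ℝ) :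
    HasDerivAt (scalePotential a b) (b - a / (1 + exp (-y))) y := by
  have hlog : HasDerivAt (fun y => log (1 + exp y)) (exp y / (1 + exp y)) y := by
    simpa using ((hasDerivAt_exp y).const_add 1).log (by positivity)
  refine (((hasDerivAt_id y).const_mul b).sub (hlog.const_mul a)).congr_deriv ?_
  rw [exp_neg]
  field_simp
  ring

lemma integral_eq_scalePotential_sub (a b y : ℝ) :
    ∫ u in 0..y, (b - a / (1 + exp (-u))) = scalePotential a b y - scalePotential a b 0 :=
  integral_eq_sub_of_hasDerivAt (fun u _ => hasDerivAt_scalePotential a b u)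
    (Continuous.intervalIntegrable (by fun_prop (disch := intro; positivity)) 0 y)

lemma continuous_scalePotential (a b : ℝ) : Continuous (scalePotential a b) :=
  continuous_iff_continuousAt.2 fun y => (hasDerivAt_scalePotential a b y).continuousAt

lemma exp_neg_scalePotential_sub (a b y : ℝ) :
    exp (-(scalePotential a b y - scalePotential a b 0)) =
      exp y * ((2 : ℝ) ^ (-a) * ((1 + exp y) ^ a * exp y ^ (-1 - b))) := by
  rw [rpow_def_of_pos (by positivity), rpow_def_of_pos (by positivity),
    rpow_def_of_pos (exp_pos y), log_exp, ← exp_add, ← exp_add, ← exp_add]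
  congr 1
  simp only [scalePotential, exp_zero, one_add_one_eq_two]
  ring

lemma mul_le_mul_log_one_add_exp {a b : ℝ} (hb : 0 ≤ b) (hba : b ≤ a) (y : ℝ) :
    b * y ≤ a * log (1 + exp y) := by
  have hlog : 0 ≤ log (1 + exp y) := log_nonneg (by linarith [exp_pos y])
  rcases le_total 0 y with hy | hy
  · have : y ≤ log (1 + exp y) := by
      rw [le_log_iff_exp_le (by positivity)]; linarith
    nlinarith
  · nlinarith

lemma two_rpow_neg_le_exp_neg_scalePotential_sub {a b : ℝ} (hb : 0 ≤ b) (hba : b ≤ a)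
    (y : ℝ) : (2 : ℝ) ^ (-a) ≤ exp (-(scalePotential a b y - scalePotential a b 0)) := by
  rw [rpow_def_of_pos two_pos, exp_le_exp]
  simp only [scalePotential, exp_zero, one_add_one_eq_two]
  linarith [mul_le_mul_log_one_add_exp hb hba y]

theorem stmt8_general (θ₀ θ₁ v : ℝ) (h0 : 0 ≤ θ₀) (h1 : θ₁ ≤ 0)
    (f : ℝ → ℝ) (hf : ∀ z, f z = θ₀ + (θ₁ - θ₀) / (1 + exp (-z)))
    (s : ℝ → ℝ)
    (hs : ∀ z, s z = ∫ y in (0:ℝ)..z, exp (-∫ u in (0:ℝ)..y, 2 * f u / v ^ 2)) :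
    (∀ z, s z = (4 : ℝ) ^ ((θ₁ - θ₀) / v ^ 2) *
      ∫ u in (1:ℝ)..exp z, (1 + u) ^ (2 * (θ₀ - θ₁) / v ^ 2) * u ^ (-1 - 2 * θ₀ / v ^ 2)) ∧
    Tendsto s atTop atTop ∧ Tendsto s atBot atBot := by
  set a := 2 * (θ₀ - θ₁) / v ^ 2
  set b := 2 * θ₀ / v ^ 2
  have hb : 0 ≤ b := by positivity
  have hba : b ≤ a := div_le_div_of_nonneg_right (by linarith) (by positivity)
  have hC : (4 : ℝ) ^ ((θ₁ - θ₀) / v ^ 2) = 2 ^ (-a) := by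
    rw [show (4 : ℝ) = 2 ^ (2 : ℝ) by norm_num, ← rpow_mul two_pos.le]
    congr 1
    ring
  have hs' : s = fun z => ∫ y in 0..z, exp (-(scalePotential a b y - scalePotential a b 0)) := by
    have hdrift : ∀ u, 2 * f u / v ^ 2 = b - a / (1 + exp (-u)) := fun u => by
      rw [hf]; ring
    ext z
    simp only [hs, hdrift, integral_eq_scalePotential_sub]
  have hφ : Continuous fun y => exp (-(scalePotential a b y - scalePotential a b 0)) := by
    have := continuous_scalePotential a b
    fun_prop
  have hle := two_rpow_neg_le_exp_neg_scalePotential_sub hb hba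
  subst hs'
  refine ⟨fun z => ?_, tendsto_integral_atTop_of_const_le (by positivity) hφ hle,
    tendsto_integral_atBot_of_const_le (by positivity) hφ hle⟩
  have hg : ContinuousOn (fun u : ℝ => (2 : ℝ) ^ (-a) * ((1 + u) ^ a * u ^ (-1 - b))) (Ioi 0) :=
    continuousOn_const.mul <| ContinuousOn.mul
      ((continuousOn_const.add continuousOn_id).rpow_const fun _ _ => .inr (hb.trans hba))
      (continuousOn_id.rpow_const fun u hu => .inl (ne_of_gt hu))
  simp only [hC, exp_neg_scalePotential_sub]
  rw [integral_exp_mul_comp_exp hg, exp_zero, integral_const_mul]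

/-- Scale function of the log-odds diffusion: explicit formula and divergence
at `±∞` when `θ₀ ≥ 0 ≥ θ₁`, `v > 0`. -/
theorem stmt8 (θ₀ θ₁ v : ℝ) (h0 : 0 ≤ θ₀) (h1 : θ₁ ≤ 0) (hv : 0 < v)
    (f : ℝ → ℝ) (hf : ∀ z, f z = θ₀ + (θ₁ - θ₀) / (1 + exp (-z)))
    (s : ℝ → ℝ)
    (hs : ∀ z, s z = ∫ y in (0:ℝ)..z, exp (-∫ u in (0:ℝ)..y, 2 * f u / v ^ 2)) :
    (∀ z, s z = (4 : ℝ) ^ ((θ₁ - θ₀) / v ^ 2) *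
      ∫ u in (1:ℝ)..exp z, (1 + u) ^ (2 * (θ₀ - θ₁) / v ^ 2) * u ^ (-1 - 2 * θ₀ / v ^ 2)) ∧
    Tendsto s atTop atTop ∧ Tendsto s atBot atBot :=
  stmt8_general θ₀ θ₁ v h0 h1 f hf s hs
end

section
/- Let θ_0 > 0 and θ_1 ≥ 0 and consider the ODE y'(t) = y(1−y)(θ_0 + (θ_1−θ_0)y) with y(0) = y_0 ∈ (0,1). Then the solution stays in (0,1) and converges to 1 as t → ∞. -/
/-! Writing the equation as `y' = y · g` and `(1 - y)' = (1 - y) · h` with `g`, `h` continuous,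
the integrating factors `exp (-∫ g)` and `exp (-∫ h)` show that `y` and `1 - y` keep their initial
(positive) sign. On `(0, 1)` the drift `θ₀ + (θ₁ - θ₀) y = θ₀ (1 - y) + θ₁ y` is at least
`θ₀ (1 - y)`, so `y` is nondecreasing and `z = 1 - y` satisfies `z' ≤ -θ₀ y₀ z²`. Hence `1 / z`
grows at least linearly and `z → 0`. -/

open Filter Set Real Topology

lemma monotoneOn_Ici_of_hasDerivAt_nonneg {f f' : ℝ → ℝ} {a : ℝ}
    (hf : ∀ t ≥ a, HasDerivAt f (f' t) t) (hf' : ∀ t ≥ a, 0 ≤ f' t) :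
    MonotoneOn f (Ici a) := by
  refine monotoneOn_of_hasDerivWithinAt_nonneg (f' := f') (convex_Ici a)
    (fun t ht => (hf t ht).continuousAt.continuousWithinAt) (fun t ht => ?_) (fun t ht => ?_)
  all_goals rw [interior_Ici] at ht
  · exact (hf t (le_of_lt ht)).hasDerivWithinAt
  · exact hf' t (le_of_lt ht)

lemma mul_exp_neg_integral_eq {u g : ℝ → ℝ} (hg : Continuous g)
    (hu : ∀ t ≥ 0, HasDerivAt u (u t * g t) t) {t : ℝ} (ht : 0 ≤ t) :
    u t * exp (-∫ s in (0)..t, g s) = u 0 := by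
  have hG : ∀ s, HasDerivAt (fun s => ∫ r in (0)..s, g r) (g s) s :=
    fun s => (hg.integral_hasStrictDerivAt 0 s).hasDerivAt
  have hderiv : ∀ s ≥ (0 : ℝ),
      HasDerivAt (fun s => u s * exp (-∫ r in (0)..s, g r)) 0 s := fun s hs =>
    ((hu s hs).mul (hG s).neg.exp).congr_deriv (by ring)
  have := constant_of_has_deriv_right_zero
    (fun s hs => (hderiv s hs.1).continuousAt.continuousWithinAt)
    (fun s hs => (hderiv s hs.1).hasDerivWithinAt) t ⟨ht, le_rfl⟩
  simpa using this

lemma pos_of_hasDerivAt_mul_self {u g : ℝ → ℝ} (hg : ContinuousOn g (Ici 0))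
    (hu : ∀ t ≥ 0, HasDerivAt u (u t * g t) t) (h0 : 0 < u 0) {t : ℝ} (ht : 0 ≤ t) :
    0 < u t := by
  -- freezing `g` at `g 0` on negative times makes its primitive differentiable at `0`
  have hext : Continuous fun s => g (max s 0) :=
    hg.comp_continuous (continuous_id.max continuous_const) fun s => le_max_right s 0
  have hu' : ∀ s ≥ 0, HasDerivAt u (u s * g (max s 0)) s := fun s hs => by
    rw [max_eq_left hs]; exact hu s hs
  have := mul_exp_neg_integral_eq hext hu' ht
  exact pos_of_mul_pos_left (this ▸ h0) (exp_pos _).le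

lemma inv_add_mul_le_inv_of_hasDerivAt_le {z z' : ℝ → ℝ} {c : ℝ}
    (hpos : ∀ t ≥ 0, 0 < z t) (hz : ∀ t ≥ 0, HasDerivAt z (z' t) t)
    (hle : ∀ t ≥ 0, z' t ≤ -c * z t ^ 2) {t : ℝ} (ht : 0 ≤ t) :
    (z 0)⁻¹ + c * t ≤ (z t)⁻¹ := by
  have hmono : MonotoneOn (fun s => (z s)⁻¹ - c * s) (Ici 0) := by
    refine monotoneOn_Ici_of_hasDerivAt_nonneg
      (fun s hs => ((hz s hs).inv (hpos s hs).ne').sub ((hasDerivAt_id s).const_mul c))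
      (fun s hs => ?_)
    have hzs := hpos s hs
    rw [neg_div, mul_one, sub_nonneg, le_neg, div_le_iff₀ (by positivity)]
    linarith [hle s hs]
  have := hmono self_mem_Ici ht ht
  simp only [mul_zero, sub_zero] at this
  linarith

lemma tendsto_zero_of_hasDerivAt_le_neg_mul_sq {z z' : ℝ → ℝ} {c : ℝ} (hc : 0 < c)
    (hpos : ∀ t ≥ 0, 0 < z t) (hz : ∀ t ≥ 0, HasDerivAt z (z' t) t)
    (hle : ∀ t ≥ 0, z' t ≤ -c * z t ^ 2) : Tendsto z atTop (𝓝 0) := by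
  have hbound : ∀ t > 0, z t ≤ (c * t)⁻¹ := fun t ht => by
    have := inv_add_mul_le_inv_of_hasDerivAt_le hpos hz hle ht.le
    rw [← inv_inv (z t)]
    exact inv_anti₀ (by positivity) (by linarith [inv_pos.2 (hpos 0 le_rfl)])
  have hlim : Tendsto (fun t : ℝ => (c * t)⁻¹) atTop (𝓝 0) :=
    tendsto_inv_atTop_zero.comp (tendsto_id.const_mul_atTop hc)
  refine tendsto_of_tendsto_of_tendsto_of_le_of_le' tendsto_const_nhds hlim ?_ ?_
  · filter_upwards [eventually_ge_atTop 0] with t ht using (hpos t ht).le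
  · filter_upwards [eventually_gt_atTop 0] with t ht using hbound t ht

lemma mul_sq_le_drift {θ₀ θ₁ a x : ℝ} (h0 : 0 < θ₀) (h1 : 0 ≤ θ₁) (ha : 0 ≤ a)
    (hax : a ≤ x) (hx : x < 1) :
    θ₀ * a * (1 - x) ^ 2 ≤ x * (1 - x) * (θ₀ + (θ₁ - θ₀) * x) := by
  have hf : θ₀ * (1 - x) ≤ θ₀ + (θ₁ - θ₀) * x := by nlinarith
  calc θ₀ * a * (1 - x) ^ 2 = (a * (1 - x)) * (θ₀ * (1 - x)) := by ring
    _ ≤ (x * (1 - x)) * (θ₀ + (θ₁ - θ₀) * x) := by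
      have : 0 ≤ x * (1 - x) := mul_nonneg (ha.trans hax) (by linarith)
      gcongr

/-- Deterministic two-agent dynamics, case II.a: for `θ₀ > 0`, `θ₁ ≥ 0`, every
solution of `y' = y(1-y)(θ₀ + (θ₁-θ₀)y)` with `y 0 = y₀ ∈ (0,1)` stays in
`(0,1)` and converges to `1`. -/
theorem stmt12 (θ₀ θ₁ : ℝ) (h0 : 0 < θ₀) (h1 : 0 ≤ θ₁)
    (y₀ : ℝ) (hy₀ : y₀ ∈ Ioo (0:ℝ) 1)
    (y : ℝ → ℝ) (hy0 : y 0 = y₀)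
    (hy : ∀ t ≥ (0:ℝ), HasDerivAt y (y t * (1 - y t) * (θ₀ + (θ₁ - θ₀) * y t)) t) :
    (∀ t ≥ (0:ℝ), y t ∈ Ioo (0:ℝ) 1) ∧ Tendsto y atTop (nhds 1) := by
  subst hy0
  have hcont : ContinuousOn y (Ici 0) := fun t ht => (hy t ht).continuousAt.continuousWithinAt
  have hpos : ∀ t ≥ 0, 0 < y t := fun t =>
    pos_of_hasDerivAt_mul_self (g := fun t => (1 - y t) * (θ₀ + (θ₁ - θ₀) * y t))
      (by fun_prop) (fun t ht => (hy t ht).congr_deriv (by ring)) hy₀.1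
  have hlt : ∀ t ≥ 0, 0 < 1 - y t := fun t =>
    pos_of_hasDerivAt_mul_self (g := fun t => -(y t * (θ₀ + (θ₁ - θ₀) * y t)))
      (by fun_prop) (fun t ht => ((hy t ht).const_sub 1).congr_deriv (by ring))
      (sub_pos.2 hy₀.2)
  have hmono : MonotoneOn y (Ici 0) := monotoneOn_Ici_of_hasDerivAt_nonneg hy fun t ht =>
    by simpa using mul_sq_le_drift h0 h1 le_rfl (hpos t ht).le (sub_pos.1 (hlt t ht))
  have hgap : Tendsto (fun t => 1 - y t) atTop (nhds 0) :=
    tendsto_zero_of_hasDerivAt_le_neg_mul_sq (mul_pos h0 hy₀.1) hlt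
      (fun t ht => (hy t ht).const_sub 1) fun t ht => by
        rw [neg_mul, neg_le_neg_iff]
        exact mul_sq_le_drift h0 h1 hy₀.1.le (hmono self_mem_Ici ht ht) (sub_pos.1 (hlt t ht))
  refine ⟨fun t ht => ⟨hpos t ht, sub_pos.1 (hlt t ht)⟩, ?_⟩
  simpa using hgap.const_sub 1
end
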